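/- Let G, H be finite groups and L ≤ G × H a subgroup with p₁(L) = G', p₂(L) = H'. Then M := L° is the unique subgroup of H × G with p₁(M) = H', p₂(M) = G' satisfying L*M*L = L and M*L*M = M. In particular, the category whose objects are pairs (G,G') with G' ≤ G ∈ 𝒟 and whose morphisms (H,H') → (G,G') are subgroups L ≤ G'×H' with p₁(L)=G', p₂(L)=H', composed via the star product, is an inverse category. -/
import Mathlib


open Subgroup

section Defs
variable {G H K : Type*} [Group G] [Group H] [Group K]

/-- Image of `L ≤ G × H` under the first projection. -/
def p1 (L : Subgroup (G × H)) : Subgroup G := L.map (MonoidHom.fst G H)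

/-- Image of `L ≤ G × H` under the second projection. -/
def p2 (L : Subgroup (G × H)) : Subgroup H := L.map (MonoidHom.snd G H)

/-- `k₁(L) = {g | (g,1) ∈ L}`. -/
def k1 (L : Subgroup (G × H)) : Subgroup G := L.comap (MonoidHom.inl G H)

/-- `k₂(L) = {h | (1,h) ∈ L}`. -/
def k2 (L : Subgroup (G × H)) : Subgroup H := L.comap (MonoidHom.inr G H)

/-- The star (composition of relations) product of subgroups. -/
def starSub (L : Subgroup (G × H)) (M : Subgroup (H × K)) : Subgroup (G × K) where
  carrier := {p | ∃ h : H, (p.1, h) ∈ L ∧ (h, p.2) ∈ M}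
  one_mem' := ⟨1, L.one_mem, M.one_mem⟩
  mul_mem' := by
    rintro ⟨g, k⟩ ⟨g', k'⟩ ⟨h, hL, hM⟩ ⟨h', hL', hM'⟩
    exact ⟨h * h', L.mul_mem hL hL', M.mul_mem hM hM'⟩
  inv_mem' := by
    rintro ⟨g, k⟩ ⟨h, hL, hM⟩
    exact ⟨h⁻¹, L.inv_mem hL, M.inv_mem hM⟩

/-- The opposite subgroup `L° ≤ H × G` of `L ≤ G × H`. -/
def oppSub (L : Subgroup (G × H)) : Subgroup (H × G) :=
  L.comap (MulEquiv.prodComm : H × G ≃* G × H).toMonoidHom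

end Defs

section Aux
variable {G H : Type*} [Group G] [Group H]

lemma mem_p1' {L : Subgroup (G × H)} {g : G} : g ∈ p1 L ↔ ∃ h, (g, h) ∈ L := by
  constructor
  · rintro ⟨⟨a, b⟩, hm, rfl⟩; exact ⟨b, hm⟩
  · rintro ⟨h, hm⟩; exact ⟨(g, h), hm, rfl⟩

lemma mem_p2' {L : Subgroup (G × H)} {h : H} : h ∈ p2 L ↔ ∃ g, (g, h) ∈ L := by
  constructor
  · rintro ⟨⟨a, b⟩, hm, rfl⟩; exact ⟨a, hm⟩
  · rintro ⟨g, hm⟩; exact ⟨(g, h), hm, rfl⟩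

lemma mem_opp' {L : Subgroup (G × H)} {h : H} {g : G} :
    (h, g) ∈ oppSub L ↔ (g, h) ∈ L := Iff.rfl

lemma opp_opp (L : Subgroup (G × H)) : oppSub (oppSub L) = L := by
  ext ⟨g, h⟩; rfl

lemma p1_opp (L : Subgroup (G × H)) : p1 (oppSub L) = p2 L := by
  ext x; rw [mem_p1', mem_p2']; exact Iff.rfl

lemma p2_opp (L : Subgroup (G × H)) : p2 (oppSub L) = p1 L := by
  ext x; rw [mem_p2', mem_p1']; exact Iff.rfl

lemma tripleL (L : Subgroup (G × H)) : starSub (starSub L (oppSub L)) L = L := by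
  ext ⟨g, b⟩
  constructor
  · rintro ⟨g', ⟨h, hgh, hg'h⟩, hg'b⟩
    have : ((g, h) * ((g', h) : G × H)⁻¹ * (g', b)) ∈ L :=
      mul_mem (mul_mem hgh (inv_mem hg'h)) hg'b
    simpa using this
  · intro hgb
    exact ⟨g, ⟨b, hgb, hgb⟩, hgb⟩

/-- Key lemma: if `p₁ M = p₂ L`, `p₂ M = p₁ L` and `L*M*L = L`, then `M ≤ L°`. -/
lemma key (L : Subgroup (G × H)) (M : Subgroup (H × G))
    (h1 : p1 M = p2 L) (h2 : p2 M = p1 L)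
    (h3 : starSub (starSub L M) L = L) :
    ∀ {h : H} {g : G}, (h, g) ∈ M → (g, h) ∈ L := by
  intro h g hm
  have hg : g ∈ p1 L := by rw [← h2, mem_p2']; exact ⟨h, hm⟩
  have hh : h ∈ p2 L := by rw [← h1, mem_p1']; exact ⟨g, hm⟩
  obtain ⟨h₁, hgh₁⟩ := mem_p1'.mp hg
  obtain ⟨g₁, hg₁h⟩ := mem_p2'.mp hh
  have hstar : ((g₁, h₁) : G × H) ∈ starSub (starSub L M) L :=
    ⟨g, ⟨h, hg₁h, hm⟩, hgh₁⟩
  rw [h3] at hstar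
  have : ((g, h₁) * ((g₁, h₁) : G × H)⁻¹ * (g₁, h)) ∈ L :=
    mul_mem (mul_mem hgh₁ (inv_mem hstar)) hg₁h
  simpa using this

end Aux

/-- `L° ` is the unique generalized inverse of `L` among subgroups `M ≤ H × G` with
`p₁(M) = p₂(L)` and `p₂(M) = p₁(L)`: `L*M*L = L` and `M*L*M = M`. This is the key property
making the category with objects `(G,G')`, morphisms the subgroups with full projections and
composition the star product, an inverse category. -/
theorem stmt17 {G H : Type*} [Group G] [Group H] [Finite G] [Finite H]
    (L : Subgroup (G × H)) :
    (p1 (oppSub L) = p2 L ∧ p2 (oppSub L) = p1 L ∧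
      starSub (starSub L (oppSub L)) L = L ∧
      starSub (starSub (oppSub L) L) (oppSub L) = oppSub L) ∧
    (∀ M : Subgroup (H × G), p1 M = p2 L → p2 M = p1 L →
      starSub (starSub L M) L = L → starSub (starSub M L) M = M → M = oppSub L) := by
  refine ⟨⟨p1_opp L, p2_opp L, tripleL L, ?_⟩, ?_⟩
  · have := tripleL (oppSub L)
    rwa [opp_opp] at this
  · intro M h1 h2 h3 h4
    apply le_antisymm
    · rintro ⟨h, g⟩ hm
      exact key L M h1 h2 h3 hm
    · rintro ⟨h, g⟩ hm
      exact key M L h2.symm h1.symm h4 (mem_opp'.mp hm)
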